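/- Let G be a finite pyramidal group with |G| > 1, and let p be the largest prime divisor of |G|. Then G has a normal Sylow p-subgroup. -/

import Mathlib

/-! The penultimate term `H` of a pyramidal chain has prime index `q` bounded by every prime
divisor of `|G|`, so `H` is normal, and `H` is again pyramidal. If `q = p` then `p` is the only
prime dividing `|G|`. Otherwise, by induction, `H` has a normal Sylow `p`-subgroup; it is
characteristic in `H`, hence normal in `G`, and it is Sylow in `G` because `p ∤ q`. -/

/-- A finite group `G` is pyramidal if it has a chain `{e} = H_0 ≤ H_1 ≤ ⋯ ≤ H_n = G`
of subgroups in which every relative index `[H_i : H_{i-1}]` is prime and these prime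
indices occur in non-ascending order. -/
def Pyramidal (G : Type*) [Group G] : Prop :=
  ∃ (n : ℕ) (f : Fin (n + 1) → Subgroup G),
    f 0 = ⊥ ∧ f (Fin.last n) = ⊤ ∧
    (∀ i : Fin n, f i.castSucc ≤ f i.succ ∧
      ((f i.castSucc).relIndex (f i.succ)).Prime) ∧
    ∀ i j : Fin n, i ≤ j →
      (f j.castSucc).relIndex (f j.succ) ≤ (f i.castSucc).relIndex (f i.succ)

open Subgroup

theorem Subgroup.relIndex_eq_prod_of_monotone {G : Type*} [Group G] :
    ∀ {n : ℕ} {f : Fin (n + 1) → Subgroup G}, Monotone f →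
      (f 0).relIndex (f (Fin.last n)) = ∏ i : Fin n, (f i.castSucc).relIndex (f i.succ)
  | 0, _, _ => by simp
  | n + 1, f, hf => by
    have ih := relIndex_eq_prod_of_monotone (hf.comp Fin.strictMono_castSucc.monotone)
    simp only [Function.comp_apply, ← Fin.succ_castSucc, Fin.castSucc_zero] at ih
    rw [Fin.prod_univ_castSucc, ← ih, Fin.succ_last]
    exact (relIndex_mul_relIndex _ _ _ (hf (Fin.zero_le _)) (hf (Fin.le_last _))).symm

theorem Subgroup.normal_of_index_prime_of_forall_le {G : Type*} [Group G] [Finite G]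
    {H : Subgroup G} (hH : H.index.Prime)
    (hle : ∀ q : ℕ, q.Prime → q ∣ Nat.card G → H.index ≤ q) : H.Normal := by
  have hG : Nat.card G ≠ 1 := fun h => hH.not_dvd_one (h ▸ H.index_dvd_card)
  exact normal_of_index_eq_minFac_card <| le_antisymm
    (hle _ (Nat.minFac_prime hG) (Nat.minFac_dvd _))
    (Nat.minFac_le_of_dvd hH.two_le H.index_dvd_card)

theorem Sylow.exists_normal_of_forall_prime_dvd_eq {G : Type*} [Group G] [Finite G] {p : ℕ}
    [Fact p.Prime] (h : ∀ q : ℕ, q.Prime → q ∣ Nat.card G → q = p) :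
    ∃ P : Sylow p G, (P : Subgroup G).Normal := by
  have hG : IsPGroup p G :=
    .of_card (Nat.eq_prime_pow_of_unique_prime_dvd Nat.card_pos.ne' fun hq hdvd => h _ hq hdvd)
  have hindex : ¬ p ∣ (⊤ : Subgroup G).index := by
    simpa using (Nat.Prime.one_lt Fact.out).ne'
  exact ⟨(hG.to_subgroup ⊤).toSylow hindex, inferInstanceAs (⊤ : Subgroup G).Normal⟩

theorem Sylow.exists_normal_of_normal_of_not_dvd_index {G : Type*} [Group G] [Finite G]
    {p : ℕ} [Fact p.Prime] {H : Subgroup G} [H.Normal] (hp : ¬ p ∣ H.index)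
    (P : Sylow p H) [hP : (P : Subgroup H).Normal] :
    ∃ Q : Sylow p G, (Q : Subgroup G).Normal := by
  have : (P : Subgroup H).Characteristic := P.characteristic_of_normal hP
  have hindex : ¬ p ∣ ((P : Subgroup H).map H.subtype).index := by
    rw [index_map_subtype]
    exact (Nat.Prime.prime Fact.out).not_dvd_mul P.not_dvd_index hp
  exact ⟨(P.isPGroup'.map H.subtype).toSylow hindex,
    inferInstanceAs ((P : Subgroup H).map H.subtype).Normal⟩

theorem Pyramidal.card_eq_one_or_exists_subgroup {G : Type*} [Group G] (hG : Pyramidal G) :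
    Nat.card G = 1 ∨ ∃ H : Subgroup G, H.index.Prime ∧
      (∀ q : ℕ, q.Prime → q ∣ Nat.card G → H.index ≤ q) ∧ Pyramidal H := by
  obtain ⟨n, f, hbot, htop, hstep, hanti⟩ := hG
  have hf : Monotone f := Fin.monotone_iff_le_succ.mpr fun i => (hstep i).1
  have hcard : Nat.card G = ∏ i : Fin n, (f i.castSucc).relIndex (f i.succ) := by
    rw [← relIndex_eq_prod_of_monotone hf, hbot, htop, relIndex_bot_left, card_top]
  cases n with
  | zero => exact .inl (by simpa using hcard)
  | succ m =>
    set H := f (Fin.last m).castSucc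
    have hindex : H.index = (f (Fin.last m).castSucc).relIndex (f (Fin.last m).succ) := by
      rw [Fin.succ_last, htop, relIndex_top_right]
    refine .inr ⟨H, hindex ▸ (hstep _).2, fun q hq hdvd => ?_, ?_⟩
    · rw [hcard] at hdvd
      obtain ⟨i, -, hi⟩ := hq.prime.exists_mem_finset_dvd hdvd
      rw [(Nat.prime_dvd_prime_iff_eq hq (hstep i).2).mp hi, hindex]
      exact hanti _ _ (Fin.le_last i)
    · have hrel (i : Fin m) :
          ((f i.castSucc.castSucc).subgroupOf H).relIndex ((f i.succ.castSucc).subgroupOf H) =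
            (f i.castSucc.castSucc).relIndex (f i.castSucc.succ) := by
        rw [relIndex_subgroupOf (hf (Fin.castSucc_le_castSucc_iff.mpr (Fin.le_last _))),
          Fin.succ_castSucc]
      refine ⟨m, fun j => (f j.castSucc).subgroupOf H, ?_, subgroupOf_self H, fun i => ?_,
        fun i j hij => ?_⟩
      · simp [hbot]
      · refine ⟨comap_mono (Fin.succ_castSucc i ▸ (hstep i.castSucc).1), ?_⟩
        simp only [hrel]
        exact (hstep i.castSucc).2
      · simp only [hrel]
        exact hanti _ _ (Fin.castSucc_le_castSucc_iff.mpr hij)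

theorem Pyramidal.exists_normal_sylow_of_forall_le {G : Type*} [Group G] [Finite G]
    (hG : Pyramidal G) {p : ℕ} [Fact p.Prime]
    (hmax : ∀ q : ℕ, q.Prime → q ∣ Nat.card G → q ≤ p) :
    ∃ P : Sylow p G, (P : Subgroup G).Normal := by
  induction hN : Nat.card G using Nat.strong_induction_on generalizing G with
  | _ N ih =>
  subst hN
  rcases hG.card_eq_one_or_exists_subgroup with h1 | ⟨H, hH, hHmin, hHpyr⟩
  · exact Sylow.exists_normal_of_forall_prime_dvd_eq fun q hq hdvd =>
      absurd (h1 ▸ hdvd) hq.not_dvd_one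
  have : H.Normal := normal_of_index_prime_of_forall_le hH hHmin
  by_cases hHp : H.index = p
  · exact Sylow.exists_normal_of_forall_prime_dvd_eq fun q hq hdvd =>
      le_antisymm (hmax q hq hdvd) (hHp ▸ hHmin q hq hdvd)
  have hlt : Nat.card H < Nat.card G := by
    rw [← card_mul_index H]
    exact lt_mul_right Nat.card_pos hH.one_lt
  obtain ⟨P, hP⟩ := ih _ hlt hHpyr
    (fun q hq hdvd => hmax q hq (hdvd.trans (card_subgroup_dvd_card H))) rfl
  exact Sylow.exists_normal_of_normal_of_not_dvd_index
    (fun hdvd => hHp ((Nat.prime_dvd_prime_iff_eq Fact.out hH).mp hdvd).symm) P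

theorem pyramidal_normal_sylow_of_max_prime_general {G : Type*} [Group G] [Finite G]
    (hpyr : Pyramidal G) (p : ℕ) (hp : p.Prime)
    (hmax : ∀ q : ℕ, q.Prime → q ∣ Nat.card G → q ≤ p) :
    ∃ P : Sylow p G, (P : Subgroup G).Normal :=
  have : Fact p.Prime := ⟨hp⟩
  hpyr.exists_normal_sylow_of_forall_le hmax

theorem pyramidal_normal_sylow_of_max_prime {G : Type*} [Group G] [Finite G]
    (hG : 1 < Nat.card G) (hpyr : Pyramidal G) (p : ℕ) (hp : p.Prime)
    (hdvd : p ∣ Nat.card G) (hmax : ∀ q : ℕ, q.Prime → q ∣ Nat.card G → q ≤ p) :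
    ∃ P : Sylow p G, (P : Subgroup G).Normal :=
  pyramidal_normal_sylow_of_max_prime_general hpyr p hp hmax
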